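/- arXiv:0908.2525 — 6 statements merged into one kernel-verified Lean document; each statement's English description precedes it below -/
import Mathlib

section
/- Let t ∈ ℝ and assume (κ1 t)^2 + (κ2 t)^2 ≠ 0. Then the torsion of γ at t, τ t = det(deriv γ t, iteratedDeriv 2 γ t, iteratedDeriv 3 γ t) / ‖iteratedDeriv 2 γ t‖^2, satisfies τ t = κ3 t + (κ1 t · deriv κ2 t − κ2 t · deriv κ1 t)/((κ1 t)^2 + (κ2 t)^2). Equivalently, det(deriv γ t, iteratedDeriv 2 γ t, iteratedDeriv 3 γ t) = ((κ1 t)^2 + (κ2 t)^2) · κ3 t + κ1 t · deriv κ2 t − κ2 t · deriv κ1 t. -/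
/-!
Differentiating `γ' = e1` twice with the structure equations expresses `γ''` and `γ'''` in the
frame: `γ'' = κ1 e2 + κ2 e3` and `γ''' = -(κ1² + κ2²) e1 + (κ1' - κ2 κ3) e2 + (κ2' + κ1 κ3) e3`.
Since `γ''` has no `e1`-component, `det(γ', γ'', γ''')` is the `2 × 2` minor of the `e2, e3`
coordinates times `det(e1, e2, e3) = ‖e1 × e2‖² = ‖e3‖² = 1`, while `‖γ''‖² = κ1² + κ2²`.
-/

open scoped RealInnerProductSpace

noncomputable def cross3 (u v : EuclideanSpace ℝ (Fin 3)) : EuclideanSpace ℝ (Fin 3) :=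
  (WithLp.equiv 2 (Fin 3 → ℝ)).symm
    ![u 1 * v 2 - u 2 * v 1, u 2 * v 0 - u 0 * v 2, u 0 * v 1 - u 1 * v 0]

noncomputable def det3 (u v w : EuclideanSpace ℝ (Fin 3)) : ℝ :=
  Matrix.det (Matrix.of (fun i j => ![u, v, w] j i))

lemma det3_eq_inner_cross (u v w : EuclideanSpace ℝ (Fin 3)) :
    det3 u v w = ⟪cross3 u v, w⟫ := by
  simp only [det3, cross3, Matrix.det_fin_three, Matrix.of_apply, PiLp.inner_apply,
    Fin.sum_univ_three, RCLike.inner_apply, conj_trivial, WithLp.equiv_symm_apply,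
    Matrix.cons_val_zero, Matrix.cons_val_one, Matrix.cons_val_two, Matrix.head_cons, Matrix.tail_cons]
  ring

lemma det3_self_cross (u v : EuclideanSpace ℝ (Fin 3)) :
    det3 u v (cross3 u v) = ‖cross3 u v‖ ^ 2 := by
  rw [det3_eq_inner_cross, real_inner_self_eq_norm_sq]

lemma det3_smul_add_smul (u v w : EuclideanSpace ℝ (Fin 3)) (a b c d f : ℝ) :
    det3 u (a • v + b • w) (c • u + d • v + f • w) = (a * f - b * d) * det3 u v w := by
  simp only [det3, Matrix.det_fin_three, Matrix.of_apply, Matrix.cons_val_zero,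
    Matrix.cons_val_one, Matrix.cons_val_two, Matrix.head_cons, Matrix.tail_cons,
    PiLp.add_apply, PiLp.smul_apply, smul_eq_mul]
  ring

lemma norm_smul_add_smul_sq_of_orthonormal {E : Type*} [NormedAddCommGroup E]
    [InnerProductSpace ℝ E] {v w : E} (hv : ‖v‖ = 1) (hw : ‖w‖ = 1) (hvw : ⟪v, w⟫ = 0)
    (a b : ℝ) : ‖a • v + b • w‖ ^ 2 = a ^ 2 + b ^ 2 := by
  rw [norm_add_sq_real, real_inner_smul_left, real_inner_smul_right, hvw, norm_smul,
    norm_smul, hv, hw, Real.norm_eq_abs, Real.norm_eq_abs]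
  simp only [mul_one, mul_zero, add_zero, sq_abs]

section Frame

variable {E : Type*} [NormedAddCommGroup E] [NormedSpace ℝ E]
  {γ e1 e2 e3 : ℝ → E} {κ1 κ2 κ3 : ℝ → ℝ}

lemma iteratedDeriv_two_eq_of_frame (he1 : e1 = deriv γ)
    (hE1 : ∀ t, deriv e1 t = κ1 t • e2 t + κ2 t • e3 t) :
    iteratedDeriv 2 γ = fun t => κ1 t • e2 t + κ2 t • e3 t := by
  rw [iteratedDeriv_succ, iteratedDeriv_one, ← he1]
  exact funext hE1

lemma iteratedDeriv_three_eq_of_frame (he1 : e1 = deriv γ)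
    (hE1 : ∀ t, deriv e1 t = κ1 t • e2 t + κ2 t • e3 t)
    (hE2 : ∀ t, deriv e2 t = (-(κ1 t)) • e1 t + κ3 t • e3 t)
    (hE3 : ∀ t, deriv e3 t = (-(κ2 t)) • e1 t - κ3 t • e2 t) {t : ℝ}
    (hκ1 : DifferentiableAt ℝ κ1 t) (hκ2 : DifferentiableAt ℝ κ2 t)
    (he2 : DifferentiableAt ℝ e2 t) (he3 : DifferentiableAt ℝ e3 t) :
    iteratedDeriv 3 γ t = (-(κ1 t ^ 2 + κ2 t ^ 2)) • e1 t
      + (deriv κ1 t - κ2 t * κ3 t) • e2 t + (deriv κ2 t + κ1 t * κ3 t) • e3 t := by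
  have hderiv := (hκ1.hasDerivAt.smul (hE2 t ▸ he2.hasDerivAt)).add
    (hκ2.hasDerivAt.smul (hE3 t ▸ he3.hasDerivAt))
  rw [iteratedDeriv_succ, iteratedDeriv_two_eq_of_frame he1 hE1]
  exact hderiv.deriv.trans (by module)

end Frame

theorem stmt1_general
    (γ e1 e2 e3 : ℝ → EuclideanSpace ℝ (Fin 3)) (κ1 κ2 κ3 : ℝ → ℝ)
    (he2s : ContDiff ℝ (⊤ : ℕ∞) e2)
    (he3s : ContDiff ℝ (⊤ : ℕ∞) e3)
    (hκ1s : ContDiff ℝ (⊤ : ℕ∞) κ1) (hκ2s : ContDiff ℝ (⊤ : ℕ∞) κ2)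
    (he1 : e1 = deriv γ)
    (hON : ∀ t, Orthonormal ℝ ![e1 t, e2 t, e3 t])
    (hor : ∀ t, e3 t = cross3 (e1 t) (e2 t))
    (hE1 : ∀ t, deriv e1 t = κ1 t • e2 t + κ2 t • e3 t)
    (hE2 : ∀ t, deriv e2 t = (-(κ1 t)) • e1 t + κ3 t • e3 t)
    (hE3 : ∀ t, deriv e3 t = (-(κ2 t)) • e1 t - κ3 t • e2 t)
    (t : ℝ) (hne : (κ1 t)^2 + (κ2 t)^2 ≠ 0) :
    det3 (deriv γ t) (iteratedDeriv 2 γ t) (iteratedDeriv 3 γ t) / ‖iteratedDeriv 2 γ t‖^2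
      = κ3 t + (κ1 t * deriv κ2 t - κ2 t * deriv κ1 t) / ((κ1 t)^2 + (κ2 t)^2)
    ∧ det3 (deriv γ t) (iteratedDeriv 2 γ t) (iteratedDeriv 3 γ t)
      = ((κ1 t)^2 + (κ2 t)^2) * κ3 t + κ1 t * deriv κ2 t - κ2 t * deriv κ1 t := by
  have h2 : iteratedDeriv 2 γ t = κ1 t • e2 t + κ2 t • e3 t :=
    congrFun (iteratedDeriv_two_eq_of_frame he1 hE1) t
  have h3 := iteratedDeriv_three_eq_of_frame he1 hE1 hE2 hE3
    (hκ1s.differentiable (by simp) t) (hκ2s.differentiable (by simp) t)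
    (he2s.differentiable (by simp) t) (he3s.differentiable (by simp) t)
  have he3_norm : ‖e3 t‖ = 1 := by simpa using (hON t).1 2
  have he2_norm : ‖e2 t‖ = 1 := by simpa using (hON t).1 1
  have he23 : ⟪e2 t, e3 t⟫ = 0 := by simpa using (hON t).2 (show (1 : Fin 3) ≠ 2 by decide)
  have hdet : det3 (deriv γ t) (iteratedDeriv 2 γ t) (iteratedDeriv 3 γ t)
      = ((κ1 t)^2 + (κ2 t)^2) * κ3 t + κ1 t * deriv κ2 t - κ2 t * deriv κ1 t := by
    rw [← he1, h2, h3, det3_smul_add_smul, hor t, det3_self_cross, ← hor t, he3_norm]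
    ring
  have hnorm : ‖iteratedDeriv 2 γ t‖ ^ 2 = κ1 t ^ 2 + κ2 t ^ 2 := by
    rw [h2, norm_smul_add_smul_sq_of_orthonormal he2_norm he3_norm he23]
  refine ⟨?_, hdet⟩
  rw [hdet, hnorm]
  field_simp
  ring

theorem stmt1
    (γ e1 e2 e3 : ℝ → EuclideanSpace ℝ (Fin 3)) (κ1 κ2 κ3 : ℝ → ℝ)
    (hγ : ContDiff ℝ (⊤ : ℕ∞) γ)
    (he1s : ContDiff ℝ (⊤ : ℕ∞) e1) (he2s : ContDiff ℝ (⊤ : ℕ∞) e2)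
    (he3s : ContDiff ℝ (⊤ : ℕ∞) e3)
    (hκ1s : ContDiff ℝ (⊤ : ℕ∞) κ1) (hκ2s : ContDiff ℝ (⊤ : ℕ∞) κ2)
    (hκ3s : ContDiff ℝ (⊤ : ℕ∞) κ3)
    (he1 : e1 = deriv γ)
    (hON : ∀ t, Orthonormal ℝ ![e1 t, e2 t, e3 t])
    (hor : ∀ t, e3 t = cross3 (e1 t) (e2 t))
    (hE1 : ∀ t, deriv e1 t = κ1 t • e2 t + κ2 t • e3 t)
    (hE2 : ∀ t, deriv e2 t = (-(κ1 t)) • e1 t + κ3 t • e3 t)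
    (hE3 : ∀ t, deriv e3 t = (-(κ2 t)) • e1 t - κ3 t • e2 t)
    (t : ℝ) (hne : (κ1 t)^2 + (κ2 t)^2 ≠ 0) :
    det3 (deriv γ t) (iteratedDeriv 2 γ t) (iteratedDeriv 3 γ t) / ‖iteratedDeriv 2 γ t‖^2
      = κ3 t + (κ1 t * deriv κ2 t - κ2 t * deriv κ1 t) / ((κ1 t)^2 + (κ2 t)^2)
    ∧ det3 (deriv γ t) (iteratedDeriv 2 γ t) (iteratedDeriv 3 γ t)
      = ((κ1 t)^2 + (κ2 t)^2) * κ3 t + κ1 t * deriv κ2 t - κ2 t * deriv κ1 t :=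
  stmt1_general γ e1 e2 e3 κ1 κ2 κ3 he2s he3s hκ1s hκ2s he1 hON hor hE1 hE2 hE3 t hne
end

section
/- Let h : ℝ → ℝ be the support-type function h t = ⟪γ t, n t⟫ (real inner product). Then for every t ∈ ℝ: iteratedDeriv 3 h t − ⟪γ t, iteratedDeriv 3 n t⟫ = −2 · deriv κ2 t + κ1 t · κ3 t. -/
open scoped RealInnerProductSpace

/-!
By the Leibniz rule, `h''' - ⟪γ, n'''⟫ = ⟪γ''', n⟫ + 3 ⟪γ'', n'⟫ + 3 ⟪γ', n''⟫`, and since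
`γ' = e₁` every term on the right is read off the structure equations of the frame:
they equal `κ₂' + κ₁ κ₃`, `-κ₁ κ₃` and `κ₁ κ₃ - κ₂'` respectively.
-/

variable {E : Type*} [NormedAddCommGroup E] [InnerProductSpace ℝ E]

theorem iteratedDeriv_inner {n : ℕ} {f g : ℝ → E} (hf : ContDiff ℝ n f) (hg : ContDiff ℝ n g)
    (t : ℝ) :
    iteratedDeriv n (fun s => ⟪f s, g s⟫) t =
      ∑ i ∈ Finset.range (n + 1),
        (n.choose i : ℝ) * ⟪iteratedDeriv i f t, iteratedDeriv (n - i) g t⟫ := by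
  induction n generalizing f g with
  | zero => simp
  | succ n ih =>
    obtain ⟨hf₁, -, hf'⟩ :=
      (contDiff_succ_iff_deriv (n := (n : WithTop ℕ∞))).mp (by exact_mod_cast hf)
    obtain ⟨hg₁, -, hg'⟩ :=
      (contDiff_succ_iff_deriv (n := (n : WithTop ℕ∞))).mp (by exact_mod_cast hg)
    have hfn : ContDiff ℝ n f := hf.of_le (by norm_cast; omega)
    have hgn : ContDiff ℝ n g := hg.of_le (by norm_cast; omega)
    have hderiv : deriv (fun s => ⟪f s, g s⟫) = fun s => ⟪f s, deriv g s⟫ + ⟪deriv f s, g s⟫ :=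
      funext fun s => deriv_inner_apply ℝ (hf₁ s) (hg₁ s)
    rw [iteratedDeriv_succ', hderiv, iteratedDeriv_fun_add (hfn.inner ℝ hg').contDiffAt
      (hf'.inner ℝ hgn).contDiffAt, ih hfn hg', ih hf' hgn,
      Finset.sum_choose_succ_mul (fun i j => ⟪iteratedDeriv i f t, iteratedDeriv j g t⟫)]
    congr 1
    · refine Finset.sum_congr rfl fun i hi => ?_
      rw [← iteratedDeriv_succ', Nat.sub_add_comm (Finset.mem_range_succ_iff.mp hi)]
    · simp only [← iteratedDeriv_succ']

theorem Orthonormal.inner_fin_three {u v w : E} (h : Orthonormal ℝ ![u, v, w]) :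
    ⟪u, u⟫ = 1 ∧ ⟪v, v⟫ = 1 ∧ ⟪w, w⟫ = 1 ∧ ⟪u, v⟫ = 0 ∧ ⟪u, w⟫ = 0 ∧ ⟪v, u⟫ = 0 ∧
      ⟪v, w⟫ = 0 ∧ ⟪w, u⟫ = 0 ∧ ⟪w, v⟫ = 0 := by
  have h := orthonormal_iff_ite.mp h
  exact ⟨by simpa using h 0 0, by simpa using h 1 1, by simpa using h 2 2, by simpa using h 0 1,
    by simpa using h 0 2, by simpa using h 1 0, by simpa using h 1 2, by simpa using h 2 0,
    by simpa using h 2 1⟩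

structure IsDarbouxFrame (e₁ e₂ e₃ : ℝ → E) (κ₁ κ₂ κ₃ : ℝ → ℝ) : Prop where
  orthonormal : ∀ t, Orthonormal ℝ ![e₁ t, e₂ t, e₃ t]
  hasDerivAt_e₁ : ∀ t, HasDerivAt e₁ (κ₁ t • e₂ t + κ₂ t • e₃ t) t
  hasDerivAt_e₂ : ∀ t, HasDerivAt e₂ (-κ₁ t • e₁ t + κ₃ t • e₃ t) t
  hasDerivAt_e₃ : ∀ t, HasDerivAt e₃ (-κ₂ t • e₁ t - κ₃ t • e₂ t) t
  differentiable_κ₁ : Differentiable ℝ κ₁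
  differentiable_κ₂ : Differentiable ℝ κ₂
  differentiable_κ₃ : Differentiable ℝ κ₃

namespace IsDarbouxFrame

variable {e₁ e₂ e₃ : ℝ → E} {κ₁ κ₂ κ₃ : ℝ → ℝ} (hF : IsDarbouxFrame e₁ e₂ e₃ κ₁ κ₂ κ₃) (t : ℝ)
include hF

theorem inner_deriv_e₁_deriv_e₃ : ⟪deriv e₁ t, deriv e₃ t⟫ = -(κ₁ t * κ₃ t) := by
  rw [(hF.hasDerivAt_e₁ t).deriv, (hF.hasDerivAt_e₃ t).deriv]
  simp only [inner_add_left, inner_sub_right, real_inner_smul_left, real_inner_smul_right,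
    (hF.orthonormal t).inner_fin_three]
  ring

theorem inner_iteratedDeriv_two_e₁_e₃ :
    ⟪iteratedDeriv 2 e₁ t, e₃ t⟫ = deriv κ₂ t + κ₁ t * κ₃ t := by
  have hderiv : deriv e₁ = fun s => κ₁ s • e₂ s + κ₂ s • e₃ s :=
    funext fun s => (hF.hasDerivAt_e₁ s).deriv
  have h := ((hF.differentiable_κ₁ t).hasDerivAt.fun_smul (hF.hasDerivAt_e₂ t)).fun_add
    ((hF.differentiable_κ₂ t).hasDerivAt.fun_smul (hF.hasDerivAt_e₃ t))
  rw [iteratedDeriv_succ, iteratedDeriv_one, hderiv, h.deriv]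
  simp only [inner_add_left, inner_sub_left, real_inner_smul_left,
    (hF.orthonormal t).inner_fin_three]
  ring

theorem inner_e₁_iteratedDeriv_two_e₃ :
    ⟪e₁ t, iteratedDeriv 2 e₃ t⟫ = κ₁ t * κ₃ t - deriv κ₂ t := by
  have hderiv : deriv e₃ = fun s => -κ₂ s • e₁ s - κ₃ s • e₂ s :=
    funext fun s => (hF.hasDerivAt_e₃ s).deriv
  have h := ((hF.differentiable_κ₂ t).hasDerivAt.fun_neg.fun_smul (hF.hasDerivAt_e₁ t)).fun_sub
    ((hF.differentiable_κ₃ t).hasDerivAt.fun_smul (hF.hasDerivAt_e₂ t))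
  rw [iteratedDeriv_succ, iteratedDeriv_one, hderiv, h.deriv]
  simp only [inner_add_right, inner_sub_right, real_inner_smul_right,
    (hF.orthonormal t).inner_fin_three]
  ring

end IsDarbouxFrame

theorem stmt6_general
    (γ e1 e2 e3 : ℝ → EuclideanSpace ℝ (Fin 3)) (κ1 κ2 κ3 : ℝ → ℝ)
    (hγ : ContDiff ℝ (⊤ : ℕ∞) γ)
    (he1s : ContDiff ℝ (⊤ : ℕ∞) e1) (he2s : ContDiff ℝ (⊤ : ℕ∞) e2)
    (he3s : ContDiff ℝ (⊤ : ℕ∞) e3)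
    (hκ1s : ContDiff ℝ (⊤ : ℕ∞) κ1) (hκ2s : ContDiff ℝ (⊤ : ℕ∞) κ2)
    (hκ3s : ContDiff ℝ (⊤ : ℕ∞) κ3)
    (he1 : e1 = deriv γ)
    (hON : ∀ t, Orthonormal ℝ ![e1 t, e2 t, e3 t])
    (hE1 : ∀ t, deriv e1 t = κ1 t • e2 t + κ2 t • e3 t)
    (hE2 : ∀ t, deriv e2 t = (-(κ1 t)) • e1 t + κ3 t • e3 t)
    (hE3 : ∀ t, deriv e3 t = (-(κ2 t)) • e1 t - κ3 t • e2 t)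
    :
    ∀ t : ℝ,
      iteratedDeriv 3 (fun s => ⟪γ s, e3 s⟫) t - ⟪γ t, iteratedDeriv 3 e3 t⟫
        = -2 * deriv κ2 t + κ1 t * κ3 t := by
  intro t
  have hF : IsDarbouxFrame e1 e2 e3 κ1 κ2 κ3 :=
    { orthonormal := hON
      hasDerivAt_e₁ := fun s => hE1 s ▸ (he1s.differentiable (by simp) s).hasDerivAt
      hasDerivAt_e₂ := fun s => hE2 s ▸ (he2s.differentiable (by simp) s).hasDerivAt
      hasDerivAt_e₃ := fun s => hE3 s ▸ (he3s.differentiable (by simp) s).hasDerivAt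
      differentiable_κ₁ := hκ1s.differentiable (by simp)
      differentiable_κ₂ := hκ2s.differentiable (by simp)
      differentiable_κ₃ := hκ3s.differentiable (by simp) }
  have hγ' (k : ℕ) : iteratedDeriv (k + 1) γ = iteratedDeriv k e1 := by
    rw [iteratedDeriv_succ', he1]
  have h3 : (3 : WithTop ℕ∞) ≤ (⊤ : ℕ∞) := WithTop.coe_le_coe.mpr le_top
  have hLeibniz : iteratedDeriv 3 (fun s => ⟪γ s, e3 s⟫) t =
      ⟪γ t, iteratedDeriv 3 e3 t⟫ + 3 * ⟪e1 t, iteratedDeriv 2 e3 t⟫ +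
        3 * ⟪deriv e1 t, deriv e3 t⟫ + ⟪iteratedDeriv 2 e1 t, e3 t⟫ := by
    rw [iteratedDeriv_inner (hγ.of_le h3) (he3s.of_le h3)]
    simp [Finset.sum_range_succ, Nat.choose, hγ']
  rw [hLeibniz, hF.inner_e₁_iteratedDeriv_two_e₃, hF.inner_deriv_e₁_deriv_e₃,
    hF.inner_iteratedDeriv_two_e₁_e₃]
  ring

theorem stmt6
    (γ e1 e2 e3 : ℝ → EuclideanSpace ℝ (Fin 3)) (κ1 κ2 κ3 : ℝ → ℝ)
    (hγ : ContDiff ℝ (⊤ : ℕ∞) γ)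
    (he1s : ContDiff ℝ (⊤ : ℕ∞) e1) (he2s : ContDiff ℝ (⊤ : ℕ∞) e2)
    (he3s : ContDiff ℝ (⊤ : ℕ∞) e3)
    (hκ1s : ContDiff ℝ (⊤ : ℕ∞) κ1) (hκ2s : ContDiff ℝ (⊤ : ℕ∞) κ2)
    (hκ3s : ContDiff ℝ (⊤ : ℕ∞) κ3)
    (he1 : e1 = deriv γ)
    (hON : ∀ t, Orthonormal ℝ ![e1 t, e2 t, e3 t])
    (hor : ∀ t, e3 t = cross3 (e1 t) (e2 t))
    (hE1 : ∀ t, deriv e1 t = κ1 t • e2 t + κ2 t • e3 t)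
    (hE2 : ∀ t, deriv e2 t = (-(κ1 t)) • e1 t + κ3 t • e3 t)
    (hE3 : ∀ t, deriv e3 t = (-(κ2 t)) • e1 t - κ3 t • e2 t)
    :
    ∀ t : ℝ,
      iteratedDeriv 3 (fun s => ⟪γ s, e3 s⟫) t - ⟪γ t, iteratedDeriv 3 e3 t⟫
        = -2 * deriv κ2 t + κ1 t * κ3 t :=
  stmt6_general γ e1 e2 e3 κ1 κ2 κ3 hγ he1s he2s he3s hκ1s hκ2s hκ3s he1 hON hE1 hE2 hE3
end

section
/- For every t ∈ ℝ, the determinant of the Gauss map data along the boundary satisfies det(n t, deriv n t, iteratedDeriv 2 n t) = κ2 t · (deriv κ3 t + κ1 t · κ2 t) + κ3 t · (κ1 t · κ3 t − deriv κ2 t). -/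
/-!
In the adapted frame, `n' = -κ2 e1 - κ3 e2` and, by the structure equations,
`n'' = (κ1 κ3 - κ2') e1 - (κ1 κ2 + κ3') e2 - (κ2² + κ3²) e3`. The determinant is alternating,
so `det(e3, a e1 + b e2, c e1 + d e2 + f e3) = (a d - b c) det(e1, e2, e3)`, and
`det(e1, e2, e1 × e2) = ‖e1 × e2‖² = 1` for a positively oriented orthonormal frame.
-/

open scoped RealInnerProductSpace

open Matrix

theorem ofLp_cross3 (u v : EuclideanSpace ℝ (Fin 3)) :
    (cross3 u v).ofLp = u.ofLp ⨯₃ v.ofLp := by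
  ext i; fin_cases i <;> simp [cross3, cross_apply]

theorem det3_eq_dotProduct_cross (u v w : EuclideanSpace ℝ (Fin 3)) :
    det3 u v w = w.ofLp ⬝ᵥ u.ofLp ⨯₃ v.ofLp := by
  simp [det3, det_fin_three, cross_apply, dotProduct, Fin.sum_univ_three]
  ring

theorem det3_cross3 (u v : EuclideanSpace ℝ (Fin 3)) :
    det3 u v (cross3 u v) = ‖u‖ ^ 2 * ‖v‖ ^ 2 - ⟪u, v⟫ ^ 2 := by
  rw [det3_eq_dotProduct_cross, ofLp_cross3, cross_dot_cross]
  simp only [← real_inner_self_eq_norm_sq, EuclideanSpace.inner_eq_star_dotProduct]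
  simp [dotProduct_comm, sq]

theorem det3_eq_one_of_orthonormal {u v w : EuclideanSpace ℝ (Fin 3)}
    (h : Orthonormal ℝ ![u, v, w]) (hw : w = cross3 u v) : det3 u v w = 1 := by
  have hu : ‖u‖ = 1 := by simpa using h.1 0
  have hv : ‖v‖ = 1 := by simpa using h.1 1
  have huv : ⟪u, v⟫ = 0 := by simpa using h.2 (show (0 : Fin 3) ≠ 1 by decide)
  rw [hw, det3_cross3, hu, hv, huv]; norm_num

theorem det3_add_smul (u v w : EuclideanSpace ℝ (Fin 3)) (a b c d f : ℝ) :
    det3 w (a • u + b • v) (c • u + d • v + f • w) = (a * d - b * c) * det3 u v w := by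
  simp [det3, det_fin_three]
  ring

section MovingFrame

variable {E : Type*} [NormedAddCommGroup E] [NormedSpace ℝ E]
  {e1 e2 e3 : ℝ → E} {κ1 κ2 κ3 : ℝ → ℝ} {t : ℝ}

theorem iteratedDeriv_two_eq_of_structure_equations
    (he1 : DifferentiableAt ℝ e1 t) (he2 : DifferentiableAt ℝ e2 t)
    (hκ2 : DifferentiableAt ℝ κ2 t) (hκ3 : DifferentiableAt ℝ κ3 t)
    (hE1 : deriv e1 t = κ1 t • e2 t + κ2 t • e3 t)
    (hE2 : deriv e2 t = (-(κ1 t)) • e1 t + κ3 t • e3 t)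
    (hE3 : ∀ s, deriv e3 s = (-(κ2 s)) • e1 s - κ3 s • e2 s) :
    iteratedDeriv 2 e3 t = (κ1 t * κ3 t - deriv κ2 t) • e1 t
      + (-(κ1 t * κ2 t + deriv κ3 t)) • e2 t + (-(κ2 t ^ 2 + κ3 t ^ 2)) • e3 t := by
  have hD : HasDerivAt (fun s => (-(κ2 s)) • e1 s - κ3 s • e2 s) _ t :=
    (hκ2.hasDerivAt.neg.smul he1.hasDerivAt).sub (hκ3.hasDerivAt.smul he2.hasDerivAt)
  rw [iteratedDeriv_succ', iteratedDeriv_one, funext hE3, hD.deriv, Pi.neg_apply, hE1, hE2]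
  module

end MovingFrame

theorem stmt7_general
    (e1 e2 e3 : ℝ → EuclideanSpace ℝ (Fin 3)) (κ1 κ2 κ3 : ℝ → ℝ)
    (he1s : ContDiff ℝ (⊤ : ℕ∞) e1) (he2s : ContDiff ℝ (⊤ : ℕ∞) e2)
    (hκ2s : ContDiff ℝ (⊤ : ℕ∞) κ2)
    (hκ3s : ContDiff ℝ (⊤ : ℕ∞) κ3)
    (hON : ∀ t, Orthonormal ℝ ![e1 t, e2 t, e3 t])
    (hor : ∀ t, e3 t = cross3 (e1 t) (e2 t))
    (hE1 : ∀ t, deriv e1 t = κ1 t • e2 t + κ2 t • e3 t)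
    (hE2 : ∀ t, deriv e2 t = (-(κ1 t)) • e1 t + κ3 t • e3 t)
    (hE3 : ∀ t, deriv e3 t = (-(κ2 t)) • e1 t - κ3 t • e2 t)
    :
    ∀ t : ℝ, det3 (e3 t) (deriv e3 t) (iteratedDeriv 2 e3 t)
      = κ2 t * (deriv κ3 t + κ1 t * κ2 t) + κ3 t * (κ1 t * κ3 t - deriv κ2 t) := by
  intro t
  rw [iteratedDeriv_two_eq_of_structure_equations (he1s.differentiable (by simp) t)
    (he2s.differentiable (by simp) t) (hκ2s.differentiable (by simp) t)
    (hκ3s.differentiable (by simp) t) (hE1 t) (hE2 t) hE3, hE3 t, sub_eq_add_neg, ← neg_smul,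
    det3_add_smul, det3_eq_one_of_orthonormal (hON t) (hor t)]
  ring

theorem stmt7
    (γ e1 e2 e3 : ℝ → EuclideanSpace ℝ (Fin 3)) (κ1 κ2 κ3 : ℝ → ℝ)
    (hγ : ContDiff ℝ (⊤ : ℕ∞) γ)
    (he1s : ContDiff ℝ (⊤ : ℕ∞) e1) (he2s : ContDiff ℝ (⊤ : ℕ∞) e2)
    (he3s : ContDiff ℝ (⊤ : ℕ∞) e3)
    (hκ1s : ContDiff ℝ (⊤ : ℕ∞) κ1) (hκ2s : ContDiff ℝ (⊤ : ℕ∞) κ2)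
    (hκ3s : ContDiff ℝ (⊤ : ℕ∞) κ3)
    (he1 : e1 = deriv γ)
    (hON : ∀ t, Orthonormal ℝ ![e1 t, e2 t, e3 t])
    (hor : ∀ t, e3 t = cross3 (e1 t) (e2 t))
    (hE1 : ∀ t, deriv e1 t = κ1 t • e2 t + κ2 t • e3 t)
    (hE2 : ∀ t, deriv e2 t = (-(κ1 t)) • e1 t + κ3 t • e3 t)
    (hE3 : ∀ t, deriv e3 t = (-(κ2 t)) • e1 t - κ3 t • e2 t)
    :
    ∀ t : ℝ, det3 (e3 t) (deriv e3 t) (iteratedDeriv 2 e3 t)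
      = κ2 t * (deriv κ3 t + κ1 t * κ2 t) + κ3 t * (κ1 t * κ3 t - deriv κ2 t) :=
  stmt7_general e1 e2 e3 κ1 κ2 κ3 he1s he2s hκ2s hκ3s hON hor hE1 hE2 hE3
end

section
/- Fix t ∈ ℝ and set h s = ⟪γ s, n s⟫ and Δ = det(n t, deriv n t, iteratedDeriv 2 n t). If Δ ≠ 0, then there exists a unique x ∈ E satisfying the system ⟪x, n t⟫ = h t, ⟪x, deriv n t⟫ = deriv h t, ⟪x, iteratedDeriv 2 n t⟫ = iteratedDeriv 2 h t, namely x = γ t − (κ2 t / Δ) • (n t × deriv n t). (This x is the point ĥγ*(t) of the dual curve of the dual-boundary, i.e. the point of the singular locus of the boundary-envelope corresponding to parameter t.) -/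
/-!
Write `h s = ⟪γ s, n s⟫`. Since `γ' = e1 ⊥ n`, differentiating gives `h' = ⟪γ, n'⟫` and
`h'' = ⟪γ, n''⟫ + ⟪e1, n'⟫ = ⟪γ, n''⟫ - κ2`. So `x` solves the system iff `γ t - x` is orthogonal to
`n` and `n'` and pairs to `κ2` with `n''`. Such a vector is a multiple of `n × n'`, and the
triple product `⟪n × n', n''⟫ = Δ` fixes the multiple; `Δ ≠ 0` makes `n, n', n''` a basis, whence
uniqueness.
-/

open scoped RealInnerProductSpace

lemma inner_eq_sum_three (x y : EuclideanSpace ℝ (Fin 3)) :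
    ⟪x, y⟫ = x 0 * y 0 + x 1 * y 1 + x 2 * y 2 := by
  simp [PiLp.inner_apply, Fin.sum_univ_three, mul_comm]

lemma inner_cross3 (u v w : EuclideanSpace ℝ (Fin 3)) : ⟪cross3 u v, w⟫ = det3 u v w := by
  simp only [cross3, det3, inner_eq_sum_three, WithLp.equiv_symm_apply, Matrix.det_fin_three,
    Matrix.of_apply, Matrix.cons_val_zero, Matrix.cons_val_one, Matrix.cons_val]
  ring

lemma inner_cross3_left (u v : EuclideanSpace ℝ (Fin 3)) : ⟪cross3 u v, u⟫ = 0 := by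
  rw [inner_cross3]
  exact Matrix.det_zero_of_column_eq (i := 0) (j := 2) (by decide) (by simp)

lemma inner_cross3_right (u v : EuclideanSpace ℝ (Fin 3)) : ⟪cross3 u v, v⟫ = 0 := by
  rw [inner_cross3]
  exact Matrix.det_zero_of_column_eq (i := 1) (j := 2) (by decide) (by simp)

lemma eq_zero_of_inner_eq_zero_of_det3_ne_zero {u v w y : EuclideanSpace ℝ (Fin 3)}
    (hΔ : det3 u v w ≠ 0) (hu : ⟪y, u⟫ = 0) (hv : ⟪y, v⟫ = 0) (hw : ⟪y, w⟫ = 0) : y = 0 := by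
  have hy : Matrix.vecMul y (Matrix.of fun i j => ![u, v, w] j i) = 0 := by
    have hcol : ∀ j, Matrix.vecMul y (Matrix.of fun i j => ![u, v, w] j i) j = ⟪y, ![u, v, w] j⟫ :=
      fun j => by simp [Matrix.vecMul, dotProduct, PiLp.inner_apply, mul_comm]
    ext j
    fin_cases j <;> simp [hcol, hu, hv, hw]
  ext i
  simpa using congrFun (Matrix.eq_zero_of_vecMul_eq_zero hΔ hy) i

lemma inner_system_iff_eq_sub_smul_cross3 {u v w p x : EuclideanSpace ℝ (Fin 3)}
    (hΔ : det3 u v w ≠ 0) (c : ℝ) :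
    (⟪x, u⟫ = ⟪p, u⟫ ∧ ⟪x, v⟫ = ⟪p, v⟫ ∧ ⟪x, w⟫ = ⟪p, w⟫ - c) ↔
      x = p - (c / det3 u v w) • cross3 u v := by
  constructor
  · rintro ⟨hu, hv, hw⟩
    rw [← sub_eq_zero]
    refine eq_zero_of_inner_eq_zero_of_det3_ne_zero hΔ ?_ ?_ ?_ <;>
      simp only [inner_sub_left, real_inner_smul_left, inner_cross3_left, inner_cross3_right,
        inner_cross3, hu, hv, hw]
    · ring
    · ring
    · field_simp; ring
  · rintro rfl
    simp only [inner_sub_left, real_inner_smul_left, inner_cross3_left, inner_cross3_right,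
      inner_cross3]
    exact ⟨by ring, by ring, by field_simp⟩

section
variable {F : Type*} [NormedAddCommGroup F] [InnerProductSpace ℝ F] {γ n : ℝ → F}

lemma deriv_inner_of_inner_deriv_eq_zero (hγ : Differentiable ℝ γ) (hn : Differentiable ℝ n)
    (horth : ∀ s, ⟪deriv γ s, n s⟫ = 0) :
    deriv (fun s => ⟪γ s, n s⟫) = fun s => ⟪γ s, deriv n s⟫ := by
  funext s
  simp [deriv_inner_apply ℝ (hγ s) (hn s), horth]

lemma iteratedDeriv_two_inner_of_inner_deriv_eq_zero (hγ : Differentiable ℝ γ)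
    (hn : ContDiff ℝ 2 n) (horth : ∀ s, ⟪deriv γ s, n s⟫ = 0) (t : ℝ) :
    iteratedDeriv 2 (fun s => ⟪γ s, n s⟫) t =
      ⟪γ t, iteratedDeriv 2 n t⟫ + ⟪deriv γ t, deriv n t⟫ := by
  have hn' : Differentiable ℝ (deriv n) :=
    (hn.iterate_deriv' 1 1).differentiable (by simp)
  simp only [iteratedDeriv_succ, iteratedDeriv_zero]
  rw [deriv_inner_of_inner_deriv_eq_zero hγ (hn.differentiable (by simp)) horth,
    deriv_inner_apply ℝ (hγ t) (hn' t)]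

end

theorem stmt9_general
    (γ e1 e2 e3 : ℝ → EuclideanSpace ℝ (Fin 3)) (κ2 κ3 : ℝ → ℝ)
    (hγ : ContDiff ℝ (⊤ : ℕ∞) γ)
    (he3s : ContDiff ℝ (⊤ : ℕ∞) e3)
    (he1 : e1 = deriv γ)
    (hON : ∀ t, Orthonormal ℝ ![e1 t, e2 t, e3 t])
    (hE3 : ∀ t, deriv e3 t = (-(κ2 t)) • e1 t - κ3 t • e2 t)
    (t : ℝ)
    (hΔ : det3 (e3 t) (deriv e3 t) (iteratedDeriv 2 e3 t) ≠ 0) :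
    ∀ x : EuclideanSpace ℝ (Fin 3),
      (⟪x, e3 t⟫ = ⟪γ t, e3 t⟫
        ∧ ⟪x, deriv e3 t⟫ = deriv (fun s => ⟪γ s, e3 s⟫) t
        ∧ ⟪x, iteratedDeriv 2 e3 t⟫ = iteratedDeriv 2 (fun s => ⟪γ s, e3 s⟫) t)
      ↔ x = γ t - (κ2 t / det3 (e3 t) (deriv e3 t) (iteratedDeriv 2 e3 t))
              • cross3 (e3 t) (deriv e3 t) := by
  have hframe := fun s => orthonormal_iff_ite.mp (hON s)
  have horth : ∀ s, ⟪deriv γ s, e3 s⟫ = 0 := fun s => by simpa [he1] using hframe s 0 2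
  have hnormal : ⟪deriv γ t, deriv e3 t⟫ = -κ2 t := by
    have h11 : ⟪e1 t, e1 t⟫ = 1 := by simpa using hframe t 0 0
    have h12 : ⟪e1 t, e2 t⟫ = 0 := by simpa using hframe t 0 1
    rw [← he1, hE3 t, inner_sub_right, real_inner_smul_right, real_inner_smul_right, h11, h12]
    ring
  have hγd : Differentiable ℝ γ := hγ.differentiable (by simp)
  intro x
  rw [deriv_inner_of_inner_deriv_eq_zero hγd (he3s.differentiable (by simp)) horth,
    iteratedDeriv_two_inner_of_inner_deriv_eq_zero hγd (he3s.of_le (by norm_cast)) horth,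
    hnormal, ← sub_eq_add_neg]
  exact inner_system_iff_eq_sub_smul_cross3 hΔ (κ2 t)

theorem stmt9
    (γ e1 e2 e3 : ℝ → EuclideanSpace ℝ (Fin 3)) (κ1 κ2 κ3 : ℝ → ℝ)
    (hγ : ContDiff ℝ (⊤ : ℕ∞) γ)
    (he1s : ContDiff ℝ (⊤ : ℕ∞) e1) (he2s : ContDiff ℝ (⊤ : ℕ∞) e2)
    (he3s : ContDiff ℝ (⊤ : ℕ∞) e3)
    (hκ1s : ContDiff ℝ (⊤ : ℕ∞) κ1) (hκ2s : ContDiff ℝ (⊤ : ℕ∞) κ2)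
    (hκ3s : ContDiff ℝ (⊤ : ℕ∞) κ3)
    (he1 : e1 = deriv γ)
    (hON : ∀ t, Orthonormal ℝ ![e1 t, e2 t, e3 t])
    (hor : ∀ t, e3 t = cross3 (e1 t) (e2 t))
    (hE1 : ∀ t, deriv e1 t = κ1 t • e2 t + κ2 t • e3 t)
    (hE2 : ∀ t, deriv e2 t = (-(κ1 t)) • e1 t + κ3 t • e3 t)
    (hE3 : ∀ t, deriv e3 t = (-(κ2 t)) • e1 t - κ3 t • e2 t)
    (t : ℝ)
    (hΔ : det3 (e3 t) (deriv e3 t) (iteratedDeriv 2 e3 t) ≠ 0) :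
    ∀ x : EuclideanSpace ℝ (Fin 3),
      (⟪x, e3 t⟫ = ⟪γ t, e3 t⟫
        ∧ ⟪x, deriv e3 t⟫ = deriv (fun s => ⟪γ s, e3 s⟫) t
        ∧ ⟪x, iteratedDeriv 2 e3 t⟫ = iteratedDeriv 2 (fun s => ⟪γ s, e3 s⟫) t)
      ↔ x = γ t - (κ2 t / det3 (e3 t) (deriv e3 t) (iteratedDeriv 2 e3 t))
              • cross3 (e3 t) (deriv e3 t) :=
  stmt9_general γ e1 e2 e3 κ2 κ3 hγ he3s he1 hON hE3 t hΔ
end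

section
/- Let t₀ ∈ ℝ and s ≥ 1 a natural number. Suppose iteratedDeriv j κ1 t₀ = 0 and iteratedDeriv j κ2 t₀ = 0 for all j with 0 ≤ j ≤ s − 2, and (iteratedDeriv (s−1) κ1 t₀, iteratedDeriv (s−1) κ2 t₀) ≠ (0, 0) (so γ has finite type (1, 1+s, 1+s+r) at t₀ and its osculating plane there is the span of {deriv γ t₀, iteratedDeriv (s+1) γ t₀}). Then the osculating plane, span of {deriv γ t₀, iteratedDeriv (s+1) γ t₀}, coincides with the tangent plane of the surface, span of {e1 t₀, e2 t₀}, if and only if iteratedDeriv (s−1) κ2 t₀ = 0. -/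
open scoped RealInnerProductSpace

/-!
Since `e1 = γ'`, we have `γ^(s+1) = e1^(s)`, and differentiating the structure equation
`e1' = κ1 e2 + κ2 e3` a further `s - 1` times by Leibniz' rule, all terms containing a lower
derivative of `κ1` or `κ2` vanish at `t₀`; hence `γ^(s+1)(t₀) = κ1^(s-1) e2 + κ2^(s-1) e3`.
As `e3 ∉ span {e1, e2}`, the plane spanned by `e1` and this vector is `span {e1, e2}` exactly when
the `e3`-coefficient `κ2^(s-1)(t₀)` vanishes.
-/

section

variable {𝕜 : Type*} [NontriviallyNormedField 𝕜] {F : Type*} [NormedAddCommGroup F]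
  [NormedSpace 𝕜 F] {f f₁ f₂ : 𝕜 → 𝕜} {g g₁ g₂ : 𝕜 → F} {n : ℕ} {x : 𝕜}

theorem iteratedDeriv_smul_of_forall_lt (hf : ContDiffAt 𝕜 n f x) (hg : ContDiffAt 𝕜 n g x)
    (h : ∀ j < n, iteratedDeriv j f x = 0) :
    iteratedDeriv n (f • g) x = iteratedDeriv n f x • g x := by
  have := iteratedDerivWithin_smul (Set.mem_univ x) uniqueDiffOn_univ hf.contDiffWithinAt
    hg.contDiffWithinAt
  simp only [iteratedDerivWithin_univ] at this
  rw [this, Finset.sum_range_succ,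
    Finset.sum_eq_zero fun j hj => by simp [h j (Finset.mem_range.mp hj)]]
  simp

theorem iteratedDeriv_add_smul_add_smul_of_forall_lt (hf₁ : ContDiffAt 𝕜 n f₁ x)
    (hf₂ : ContDiffAt 𝕜 n f₂ x) (hg₁ : ContDiffAt 𝕜 n g₁ x) (hg₂ : ContDiffAt 𝕜 n g₂ x)
    (h : ∀ j < n, iteratedDeriv j f₁ x = 0 ∧ iteratedDeriv j f₂ x = 0) :
    iteratedDeriv n (f₁ • g₁ + f₂ • g₂) x =
      iteratedDeriv n f₁ x • g₁ x + iteratedDeriv n f₂ x • g₂ x := by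
  rw [iteratedDeriv_add (hf₁.smul hg₁) (hf₂.smul hg₂),
    iteratedDeriv_smul_of_forall_lt hf₁ hg₁ fun j hj => (h j hj).1,
    iteratedDeriv_smul_of_forall_lt hf₂ hg₂ fun j hj => (h j hj).2]

end

section

variable {K V : Type*} [Field K] [AddCommGroup V] [Module K V] {u v w : V} {a b : K}

theorem Submodule.span_pair_smul_right (u v : V) (ha : a ≠ 0) :
    Submodule.span K {u, a • v} = Submodule.span K {u, v} := by
  rw [Submodule.span_insert, Submodule.span_insert, Submodule.span_singleton_smul_eq ha.isUnit]

theorem Submodule.span_pair_smul_add_smul_eq_iff (hw : w ∉ Submodule.span K {u, v})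
    (hab : (a, b) ≠ (0, 0)) :
    Submodule.span K {u, a • v + b • w} = Submodule.span K {u, v} ↔ b = 0 := by
  constructor
  · intro h
    by_contra hb
    obtain ⟨c, d, hcd⟩ := Submodule.mem_span_pair.mp
      (h ▸ Submodule.subset_span (by simp) : a • v + b • w ∈ Submodule.span K {u, v})
    apply hw
    have : w = b⁻¹ • (c • u + d • v - a • v) := by
      rw [hcd, add_sub_cancel_left, smul_smul, inv_mul_cancel₀ hb, one_smul]
    rw [this]
    exact Submodule.smul_mem _ _ (Submodule.sub_mem _ (Submodule.mem_span_pair.mpr ⟨c, d, rfl⟩)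
      (Submodule.smul_mem _ _ (Submodule.subset_span (by simp))))
  · rintro rfl
    rw [zero_smul, add_zero, span_pair_smul_right u v fun ha => hab (by simp [ha])]

end

theorem Orthonormal.third_notMem_span_pair {E : Type*} [NormedAddCommGroup E]
    [InnerProductSpace ℝ E] {u v w : E}
    (h : Orthonormal ℝ ![u, v, w]) : w ∉ Submodule.span ℝ {u, v} := by
  have := h.linearIndependent.notMem_span_image (s := {0, 1}) (x := 2) (by decide)
  simpa [Set.image_insert_eq] using this

theorem stmt13_general
    (γ e1 e2 e3 : ℝ → EuclideanSpace ℝ (Fin 3)) (κ1 κ2 : ℝ → ℝ)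
    (he2s : ContDiff ℝ (⊤ : ℕ∞) e2)
    (he3s : ContDiff ℝ (⊤ : ℕ∞) e3)
    (hκ1s : ContDiff ℝ (⊤ : ℕ∞) κ1) (hκ2s : ContDiff ℝ (⊤ : ℕ∞) κ2)
    (he1 : e1 = deriv γ)
    (hON : ∀ t, Orthonormal ℝ ![e1 t, e2 t, e3 t])
    (hE1 : ∀ t, deriv e1 t = κ1 t • e2 t + κ2 t • e3 t)
    (t₀ : ℝ) (s : ℕ) (hs : 1 ≤ s)
    (hvan : ∀ j : ℕ, j + 2 ≤ s → iteratedDeriv j κ1 t₀ = 0 ∧ iteratedDeriv j κ2 t₀ = 0)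
    (hnz : (iteratedDeriv (s - 1) κ1 t₀, iteratedDeriv (s - 1) κ2 t₀) ≠ (0, 0)) :
    Submodule.span ℝ
        ({deriv γ t₀, iteratedDeriv (s + 1) γ t₀} : Set (EuclideanSpace ℝ (Fin 3)))
      = Submodule.span ℝ ({e1 t₀, e2 t₀} : Set (EuclideanSpace ℝ (Fin 3)))
    ↔ iteratedDeriv (s - 1) κ2 t₀ = 0 := by
  obtain ⟨m, rfl⟩ : ∃ m, s = m + 1 := ⟨s - 1, by omega⟩
  rw [Nat.add_sub_cancel] at hnz ⊢
  have hosc : iteratedDeriv (m + 1 + 1) γ t₀ =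
      iteratedDeriv m κ1 t₀ • e2 t₀ + iteratedDeriv m κ2 t₀ • e3 t₀ := by
    rw [iteratedDeriv_succ', iteratedDeriv_succ', ← he1,
      show deriv e1 = κ1 • e2 + κ2 • e3 from funext hE1]
    exact iteratedDeriv_add_smul_add_smul_of_forall_lt (contDiff_infty.mp hκ1s m).contDiffAt
      (contDiff_infty.mp hκ2s m).contDiffAt (contDiff_infty.mp he2s m).contDiffAt
      (contDiff_infty.mp he3s m).contDiffAt fun j hj => hvan j (by omega)
  rw [← he1, hosc]
  exact Submodule.span_pair_smul_add_smul_eq_iff (hON t₀).third_notMem_span_pair hnz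

theorem stmt13
    (γ e1 e2 e3 : ℝ → EuclideanSpace ℝ (Fin 3)) (κ1 κ2 κ3 : ℝ → ℝ)
    (hγ : ContDiff ℝ (⊤ : ℕ∞) γ)
    (he1s : ContDiff ℝ (⊤ : ℕ∞) e1) (he2s : ContDiff ℝ (⊤ : ℕ∞) e2)
    (he3s : ContDiff ℝ (⊤ : ℕ∞) e3)
    (hκ1s : ContDiff ℝ (⊤ : ℕ∞) κ1) (hκ2s : ContDiff ℝ (⊤ : ℕ∞) κ2)
    (hκ3s : ContDiff ℝ (⊤ : ℕ∞) κ3)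
    (he1 : e1 = deriv γ)
    (hON : ∀ t, Orthonormal ℝ ![e1 t, e2 t, e3 t])
    (hor : ∀ t, e3 t = cross3 (e1 t) (e2 t))
    (hE1 : ∀ t, deriv e1 t = κ1 t • e2 t + κ2 t • e3 t)
    (hE2 : ∀ t, deriv e2 t = (-(κ1 t)) • e1 t + κ3 t • e3 t)
    (hE3 : ∀ t, deriv e3 t = (-(κ2 t)) • e1 t - κ3 t • e2 t)
    (t₀ : ℝ) (s : ℕ) (hs : 1 ≤ s)
    (hvan : ∀ j : ℕ, j + 2 ≤ s → iteratedDeriv j κ1 t₀ = 0 ∧ iteratedDeriv j κ2 t₀ = 0)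
    (hnz : (iteratedDeriv (s - 1) κ1 t₀, iteratedDeriv (s - 1) κ2 t₀) ≠ (0, 0)) :
    Submodule.span ℝ
        ({deriv γ t₀, iteratedDeriv (s + 1) γ t₀} : Set (EuclideanSpace ℝ (Fin 3)))
      = Submodule.span ℝ ({e1 t₀, e2 t₀} : Set (EuclideanSpace ℝ (Fin 3)))
    ↔ iteratedDeriv (s - 1) κ2 t₀ = 0 :=
  stmt13_general γ e1 e2 e3 κ1 κ2 he2s he3s hκ1s hκ2s he1 hON hE1 t₀ s hs hvan hnz
end

section
/- Let t ∈ ℝ and s ≥ 1 a natural number. Then the following are equivalent: (a) for every i with 1 ≤ i ≤ s, the span of {deriv γ t, iteratedDeriv 2 γ t, …, iteratedDeriv i γ t} is one-dimensional; (b) iteratedDeriv j κ1 t = 0 and iteratedDeriv j κ2 t = 0 for all j with 0 ≤ j ≤ s − 2. Moreover, if these conditions hold, then iteratedDeriv (s+1) γ t = iteratedDeriv (s−1) κ1 t • e2 t + iteratedDeriv (s−1) κ2 t • e3 t. -/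
/-!
Since `γ' = e₁` and `e₁' = κ₁ e₂ + κ₂ e₃`, we have `γ⁽ʲ⁺²⁾ = (κ₁ e₂ + κ₂ e₃)⁽ʲ⁾`. If `κ₁` and `κ₂`
vanish to order `j` at `t`, the Leibniz rule leaves only the terms `κ₁⁽ʲ⁾ e₂ + κ₂⁽ʲ⁾ e₃`. Such a
vector lies on the line spanned by `γ' = e₁` exactly when both coefficients vanish, and the
equivalence follows by induction on `j`.
-/

open scoped RealInnerProductSpace

open Module Submodule

open scoped ContDiff

theorem iteratedDeriv_smul_of_forall_lt_eq_zero {𝕜 F : Type*} [NontriviallyNormedField 𝕜]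
    [NormedAddCommGroup F] [NormedSpace 𝕜 F] {f : 𝕜 → 𝕜} {g : 𝕜 → F} {x : 𝕜} {n : ℕ}
    (hf : ContDiff 𝕜 ∞ f) (hg : ContDiff 𝕜 ∞ g)
    (hvan : ∀ m < n, iteratedDeriv m f x = 0) :
    iteratedDeriv n (fun y => f y • g y) x = iteratedDeriv n f x • g x := by
  induction n generalizing f g with
  | zero => simp
  | succ n ih =>
    have hf' : ContDiff 𝕜 ∞ (deriv f) := hf.iterate_deriv 1
    have hg' : ContDiff 𝕜 ∞ (deriv g) := hg.iterate_deriv 1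
    have hderiv : deriv (fun y => f y • g y) = fun y => f y • deriv g y + deriv f y • g y :=
      funext fun y => deriv_fun_smul (hf.differentiable (by simp) y) (hg.differentiable (by simp) y)
    -- `f` vanishes to order `n + 1` at `x`, so the term carrying `f⁽ⁿ⁾ • g'` drops out.
    have hfg' : iteratedDeriv n (fun y => f y • deriv g y) x = 0 := by
      rw [ih hf hg' fun m hm => hvan m (by omega), hvan n n.lt_succ_self, zero_smul]
    rw [iteratedDeriv_succ', hderiv,
      iteratedDeriv_fun_add (f := fun y => f y • deriv g y) (g := fun y => deriv f y • g y)
        ((hf.smul hg').of_le (mod_cast le_top)).contDiffAt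
        ((hf'.smul hg).of_le (mod_cast le_top)).contDiffAt,
      hfg', zero_add, ih hf' hg fun m hm => by rw [← iteratedDeriv_succ']; exact hvan _ (by omega),
      ← iteratedDeriv_succ']

theorem finrank_span_eq_one_iff_subset_span_singleton {K V : Type*} [DivisionRing K]
    [AddCommGroup V] [Module K V] {S : Set V} {v : V} (hv : v ≠ 0) (hvS : v ∈ S) :
    finrank K (span K S) = 1 ↔ S ⊆ K ∙ v := by
  have hle : K ∙ v ≤ span K S := span_mono (Set.singleton_subset_iff.2 hvS)
  constructor
  · intro h
    have : FiniteDimensional K (span K S) := Module.finite_of_finrank_eq_succ h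
    rw [eq_of_le_of_finrank_le hle (by rw [h, finrank_span_singleton hv])]
    exact subset_span
  · intro h
    rw [le_antisymm (span_le.2 h) hle, finrank_span_singleton hv]

theorem finrank_span_image_Icc_eq_one_iff {K V : Type*} [DivisionRing K] [AddCommGroup V]
    [Module K V] {Γ : ℕ → V} (h1 : Γ 1 ≠ 0) (s : ℕ) :
    (∀ i, 1 ≤ i → i ≤ s → finrank K (span K (Γ '' Set.Icc 1 i)) = 1) ↔
      ∀ k, 2 ≤ k → k ≤ s → Γ k ∈ K ∙ Γ 1 := by
  constructor
  · intro h k hk2 hks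
    exact (finrank_span_eq_one_iff_subset_span_singleton h1
      (Set.mem_image_of_mem Γ (Set.left_mem_Icc.2 (by omega : 1 ≤ k)))).1
      (h k (by omega) hks) (Set.mem_image_of_mem Γ (Set.right_mem_Icc.2 (by omega)))
  · intro h i hi1 his
    rw [finrank_span_eq_one_iff_subset_span_singleton h1
      (Set.mem_image_of_mem Γ (Set.left_mem_Icc.2 hi1))]
    rintro _ ⟨k, ⟨hk1, hki⟩, rfl⟩
    rcases hk1.eq_or_lt with rfl | hk
    · exact mem_span_singleton_self _
    · exact h k hk (hki.trans his)

theorem smul_add_smul_mem_span_singleton_iff {E : Type*} [NormedAddCommGroup E]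
    [InnerProductSpace ℝ E] {u v w : E} (h : Orthonormal ℝ ![u, v, w]) {a b : ℝ} :
    a • v + b • w ∈ ℝ ∙ u ↔ a = 0 ∧ b = 0 := by
  refine ⟨fun hmem => ?_, by rintro ⟨rfl, rfl⟩; simp⟩
  obtain ⟨c, hc⟩ := mem_span_singleton.1 hmem
  have hcoeff := Fintype.linearIndependent_iff.1 h.linearIndependent ![-c, a, b]
    (by simp [Fin.sum_univ_three, hc])
  exact ⟨hcoeff 1, hcoeff 2⟩

section Frame

variable {F : Type*} [NormedAddCommGroup F] {γ e1 e2 e3 : ℝ → F} {κ1 κ2 : ℝ → ℝ}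

theorem iteratedDeriv_add_two_eq_of_frame [NormedSpace ℝ F] (he1 : e1 = deriv γ)
    (hE1 : ∀ t, deriv e1 t = κ1 t • e2 t + κ2 t • e3 t) (he2 : ContDiff ℝ ∞ e2)
    (he3 : ContDiff ℝ ∞ e3) (hκ1 : ContDiff ℝ ∞ κ1) (hκ2 : ContDiff ℝ ∞ κ2) {t : ℝ} {j : ℕ}
    (hvan : ∀ m < j, iteratedDeriv m κ1 t = 0 ∧ iteratedDeriv m κ2 t = 0) :
    iteratedDeriv (j + 2) γ t = iteratedDeriv j κ1 t • e2 t + iteratedDeriv j κ2 t • e3 t := by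
  have hγ'' : deriv (deriv γ) = fun y => κ1 y • e2 y + κ2 y • e3 y := he1 ▸ funext hE1
  rw [iteratedDeriv_succ', iteratedDeriv_succ', hγ'',
    iteratedDeriv_fun_add (f := fun y => κ1 y • e2 y) (g := fun y => κ2 y • e3 y)
      ((hκ1.smul he2).of_le (mod_cast le_top)).contDiffAt
      ((hκ2.smul he3).of_le (mod_cast le_top)).contDiffAt,
    iteratedDeriv_smul_of_forall_lt_eq_zero hκ1 he2 fun m hm => (hvan m hm).1,
    iteratedDeriv_smul_of_forall_lt_eq_zero hκ2 he3 fun m hm => (hvan m hm).2]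

theorem forall_iteratedDeriv_mem_span_iff_of_frame [InnerProductSpace ℝ F] (he1 : e1 = deriv γ)
    (hE1 : ∀ t, deriv e1 t = κ1 t • e2 t + κ2 t • e3 t) (he2 : ContDiff ℝ ∞ e2)
    (he3 : ContDiff ℝ ∞ e3) (hκ1 : ContDiff ℝ ∞ κ1) (hκ2 : ContDiff ℝ ∞ κ2) {t : ℝ}
    (hON : Orthonormal ℝ ![e1 t, e2 t, e3 t]) (s : ℕ) :
    (∀ k, 2 ≤ k → k ≤ s → iteratedDeriv k γ t ∈ ℝ ∙ e1 t) ↔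
      ∀ j, j + 2 ≤ s → iteratedDeriv j κ1 t = 0 ∧ iteratedDeriv j κ2 t = 0 := by
  constructor
  · intro h j
    induction j using Nat.strong_induction_on with
    | _ j ih =>
      intro hj
      rw [← smul_add_smul_mem_span_singleton_iff hON, ← iteratedDeriv_add_two_eq_of_frame he1 hE1
        he2 he3 hκ1 hκ2 fun m hm => ih m hm (by omega)]
      exact h (j + 2) (by omega) hj
  · intro h k hk2 hks
    obtain ⟨j, rfl⟩ : ∃ j, k = j + 2 := ⟨k - 2, by omega⟩
    rw [iteratedDeriv_add_two_eq_of_frame he1 hE1 he2 he3 hκ1 hκ2 fun m hm => h m (by omega),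
      (h j hks).1, (h j hks).2, zero_smul, zero_smul, add_zero]
    exact zero_mem _

end Frame

theorem stmt14_general
    (γ e1 e2 e3 : ℝ → EuclideanSpace ℝ (Fin 3)) (κ1 κ2 : ℝ → ℝ)
    (he2s : ContDiff ℝ (⊤ : ℕ∞) e2)
    (he3s : ContDiff ℝ (⊤ : ℕ∞) e3)
    (hκ1s : ContDiff ℝ (⊤ : ℕ∞) κ1) (hκ2s : ContDiff ℝ (⊤ : ℕ∞) κ2)
    (he1 : e1 = deriv γ)
    (hON : ∀ t, Orthonormal ℝ ![e1 t, e2 t, e3 t])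
    (hE1 : ∀ t, deriv e1 t = κ1 t • e2 t + κ2 t • e3 t)
    (t : ℝ) (s : ℕ) (hs : 1 ≤ s) :
    ((∀ i : ℕ, 1 ≤ i → i ≤ s →
        Module.finrank ℝ
          (Submodule.span ℝ ((fun k => iteratedDeriv k γ t) '' Set.Icc 1 i)) = 1)
      ↔ (∀ j : ℕ, j + 2 ≤ s → iteratedDeriv j κ1 t = 0 ∧ iteratedDeriv j κ2 t = 0))
    ∧ ((∀ j : ℕ, j + 2 ≤ s → iteratedDeriv j κ1 t = 0 ∧ iteratedDeriv j κ2 t = 0) →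
        iteratedDeriv (s + 1) γ t
          = iteratedDeriv (s - 1) κ1 t • e2 t + iteratedDeriv (s - 1) κ2 t • e3 t) := by
  have hγ' : iteratedDeriv 1 γ t = e1 t := by rw [iteratedDeriv_one, he1]
  refine ⟨?_, fun hvan => ?_⟩
  · rw [finrank_span_image_Icc_eq_one_iff (hγ' ▸ (hON t).ne_zero 0) s, hγ']
    exact forall_iteratedDeriv_mem_span_iff_of_frame he1 hE1 he2s he3s hκ1s hκ2s (hON t) s
  · obtain ⟨j, rfl⟩ : ∃ j, s = j + 1 := ⟨s - 1, by omega⟩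
    exact iteratedDeriv_add_two_eq_of_frame he1 hE1 he2s he3s hκ1s hκ2s
      fun m hm => hvan m (by omega)

theorem stmt14
    (γ e1 e2 e3 : ℝ → EuclideanSpace ℝ (Fin 3)) (κ1 κ2 κ3 : ℝ → ℝ)
    (hγ : ContDiff ℝ (⊤ : ℕ∞) γ)
    (he1s : ContDiff ℝ (⊤ : ℕ∞) e1) (he2s : ContDiff ℝ (⊤ : ℕ∞) e2)
    (he3s : ContDiff ℝ (⊤ : ℕ∞) e3)
    (hκ1s : ContDiff ℝ (⊤ : ℕ∞) κ1) (hκ2s : ContDiff ℝ (⊤ : ℕ∞) κ2)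
    (hκ3s : ContDiff ℝ (⊤ : ℕ∞) κ3)
    (he1 : e1 = deriv γ)
    (hON : ∀ t, Orthonormal ℝ ![e1 t, e2 t, e3 t])
    (hor : ∀ t, e3 t = cross3 (e1 t) (e2 t))
    (hE1 : ∀ t, deriv e1 t = κ1 t • e2 t + κ2 t • e3 t)
    (hE2 : ∀ t, deriv e2 t = (-(κ1 t)) • e1 t + κ3 t • e3 t)
    (hE3 : ∀ t, deriv e3 t = (-(κ2 t)) • e1 t - κ3 t • e2 t)
    (t : ℝ) (s : ℕ) (hs : 1 ≤ s) :
    ((∀ i : ℕ, 1 ≤ i → i ≤ s →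
        Module.finrank ℝ
          (Submodule.span ℝ ((fun k => iteratedDeriv k γ t) '' Set.Icc 1 i)) = 1)
      ↔ (∀ j : ℕ, j + 2 ≤ s → iteratedDeriv j κ1 t = 0 ∧ iteratedDeriv j κ2 t = 0))
    ∧ ((∀ j : ℕ, j + 2 ≤ s → iteratedDeriv j κ1 t = 0 ∧ iteratedDeriv j κ2 t = 0) →
        iteratedDeriv (s + 1) γ t
          = iteratedDeriv (s - 1) κ1 t • e2 t + iteratedDeriv (s - 1) κ2 t • e3 t) :=
  stmt14_general γ e1 e2 e3 κ1 κ2 he2s he3s hκ1s hκ2s he1 hON hE1 t s hs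
end
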